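/- arXiv:2004.08783 — 2 statements merged into one kernel-verified Lean document; each statement's English description precedes it below -/
import Mathlib

section
/- Let L = {(a,b,c) ∈ ℝ³ : a ≥ 0, c ≥ 0, ac ≥ b²}. Then: (i) for all (a,b,c) ∈ L, if a ≤ 0 then b ≤ 0; (ii) for every ε > 0 and all (a,b,c) ∈ L, b ≤ ε·‖(a,b,c)‖₂ + (1/ε)·a; (iii) for every λ ≥ 0 there exists (a,b,c) ∈ L with b > λ·a — namely (1, 1+λ, (1+λ)²) ∈ L and 1+λ > λ. In particular, the error term ε·‖x‖₂ in the conclusion 'for every ε > 0 there exists λ ≥ 0 such that for all (a,b,c) ∈ L, b ≤ ε·‖(a,b,c)‖₂ + λ·a' cannot be removed. -/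
/-- Example B.3: for `L = {(a,b,c) : a ≥ 0, c ≥ 0, ac ≥ b²}`:
(i) `a ≤ 0 → b ≤ 0` on `L`;
(ii) for every `ε > 0`, `b ≤ ε·‖(a,b,c)‖₂ + (1/ε)·a` on `L` (with `λ = 1/ε`);
(iii) for every `λ ≥ 0` there is `(a,b,c) ∈ L` with `b > λ·a`, namely
`(1, 1+lam, (1+lam)²)`.  Hence the error term `ε·‖x‖₂` cannot be removed. -/
theorem stmt15 :
    (∀ a b c : ℝ, 0 ≤ a → 0 ≤ c → b ^ 2 ≤ a * c → a ≤ 0 → b ≤ 0) ∧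
    (∀ ε : ℝ, 0 < ε → ∀ a b c : ℝ, 0 ≤ a → 0 ≤ c → b ^ 2 ≤ a * c →
      b ≤ ε * Real.sqrt (a ^ 2 + b ^ 2 + c ^ 2) + (1 / ε) * a) ∧
    (∀ lam : ℝ, 0 ≤ lam →
      (0 ≤ (1 : ℝ) ∧ 0 ≤ ((1 + lam) ^ 2 : ℝ) ∧
        ((1 + lam) : ℝ) ^ 2 ≤ 1 * (1 + lam) ^ 2) ∧
      lam * 1 < 1 + lam) := by
  refine ⟨?_, ?_, ?_⟩
  · intro a b c ha hc h hle
    have ha0 : a = 0 := le_antisymm hle ha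
    nlinarith [sq_nonneg b]
  · intro ε hε a b c ha hc h
    have hcs : c ≤ Real.sqrt (a ^ 2 + b ^ 2 + c ^ 2) := by
      have := Real.sqrt_le_sqrt (show c ^ 2 ≤ a ^ 2 + b ^ 2 + c ^ 2 by nlinarith [sq_nonneg a, sq_nonneg b])
      rwa [Real.sqrt_sq hc] at this
    have key : b ≤ (1 / ε) * a + ε * c := by
      have h1 : b ≤ Real.sqrt (a * c) := by
        calc b ≤ |b| := le_abs_self b
        _ = Real.sqrt (b ^ 2) := (Real.sqrt_sq_eq_abs b).symm
        _ ≤ Real.sqrt (a * c) := Real.sqrt_le_sqrt h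
      have h2 : Real.sqrt (a * c) ≤ (1 / ε) * a + ε * c := by
        have hr : a * c ≤ ((1 / ε) * a + ε * c) ^ 2 := by
          have : (0:ℝ) < ε := hε
          have e1 : ((1 / ε) * a - ε * c) ^ 2 ≥ 0 := sq_nonneg _
          have e2 : (1 / ε) * ε = 1 := by field_simp
          nlinarith [mul_nonneg ha hc]
        have := Real.sqrt_le_sqrt hr
        rwa [Real.sqrt_sq (by positivity)] at this
      linarith
    have : ε * c ≤ ε * Real.sqrt (a ^ 2 + b ^ 2 + c ^ 2) :=
      mul_le_mul_of_nonneg_left hcs hε.le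
    linarith
  · intro lam hlam
    refine ⟨⟨zero_le_one, by positivity, by nlinarith⟩, by nlinarith⟩
end

section
/- Let α ∈ (0,1), let γ = 1 − α, and let K = {(a,b,c) ∈ ℝ³ : a ≥ 0, c ≥ 0, a^α · c^γ ≥ b}, where a^α and c^γ are real powers of nonnegative reals. Then: (i) for every (a,b,c) ∈ K, max(a − b, c − b) ≥ 0, i.e. a ≥ b or c ≥ b; (ii) if λ is a real number with 0 ≤ λ such that λ·a + (1−λ)·c ≥ b for all (a,b,c) ∈ K, then λ = α. In particular, when α is irrational, the coefficient λ in the linear inequality implying the max-inequality on K cannot be chosen rational. -/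
/-!
On `K` the weighted AM–GM inequality gives `b ≤ a ^ α * c ^ γ ≤ α * a + γ * c ≤ max a c`, which is (i)
and shows that `λ = α` works. Conversely, putting `c = 1` and `b = t ^ α` turns the linear inequality
into `t ^ α ≤ λ * t + (1 - λ)` for all `t ≥ 0`, with equality at `t = 1`; so the line is tangent to
`t ↦ t ^ α` at `1`, and its slope `λ` must be the derivative `α` there.
-/

theorem Real.rpow_mul_rpow_le_max {w₁ w₂ a c : ℝ} (hw₁ : 0 ≤ w₁) (hw₂ : 0 ≤ w₂)
    (hw : w₁ + w₂ = 1) (ha : 0 ≤ a) (hc : 0 ≤ c) : a ^ w₁ * c ^ w₂ ≤ max a c :=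
  calc a ^ w₁ * c ^ w₂ ≤ w₁ * a + w₂ * c := Real.geom_mean_le_arith_mean2_weighted hw₁ hw₂ ha hc hw
    _ ≤ w₁ * max a c + w₂ * max a c := by gcongr <;> simp
    _ = max a c := by rw [← add_mul, hw, one_mul]

theorem Real.eq_of_forall_rpow_le_affine {α lam : ℝ}
    (h : ∀ t : ℝ, 0 < t → t ^ α ≤ lam * t + (1 - lam)) : lam = α := by
  set g : ℝ → ℝ := fun t => lam * t + (1 - lam) - t ^ α
  have hmin : IsLocalMin g 1 := by
    filter_upwards [eventually_gt_nhds one_pos] with t ht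
    simpa [g] using h t ht
  have hderiv : HasDerivAt g (lam - α) 1 := by
    have hpow := Real.hasDerivAt_rpow_const (x := 1) (p := α) (Or.inl one_ne_zero)
    rw [Real.one_rpow, mul_one] at hpow
    have hline : HasDerivAt (fun t : ℝ => lam * t + (1 - lam)) lam 1 := by
      simpa using ((hasDerivAt_id (1 : ℝ)).const_mul lam).add_const (1 - lam)
    exact hline.sub hpow
  linarith [hmin.hasDerivAt_eq_zero hderiv]

/-- Example C.2: let `α ∈ (0,1)`, `γ = 1 − α`, and
`K = {(a,b,c) : a ≥ 0, c ≥ 0, a^α·c^γ ≥ b}` (real powers).  Then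
(i) on `K`, `max(a − b, c − b) ≥ 0`, i.e. `b ≤ a` or `b ≤ c`;
(ii) the only `λ ≥ 0` with `λ·a + (1−λ)·c ≥ b` on all of `K` is `λ = α`.
In particular, for irrational `α` the coefficient `λ` cannot be chosen rational. -/
theorem stmt16 (α γ : ℝ) (hα0 : 0 < α) (hα1 : α < 1) (hγ : γ = 1 - α) :
    (∀ a b c : ℝ, 0 ≤ a → 0 ≤ c → b ≤ a ^ α * c ^ γ → (b ≤ a ∨ b ≤ c)) ∧
    (∀ lam : ℝ, 0 ≤ lam →
      (∀ a b c : ℝ, 0 ≤ a → 0 ≤ c → b ≤ a ^ α * c ^ γ →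
        b ≤ lam * a + (1 - lam) * c) →
      lam = α) := by
  refine ⟨fun a b c ha hc hb => le_max_iff.mp ?_, fun lam _ hlam => ?_⟩
  · exact hb.trans (Real.rpow_mul_rpow_le_max hα0.le (by linarith) (by linarith) ha hc)
  · refine Real.eq_of_forall_rpow_le_affine fun t ht => ?_
    simpa using hlam t (t ^ α) 1 ht.le zero_le_one (by simp)
end
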